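/- Let n be a positive integer, let H be an n×n complex Hermitian matrix, let ψ₀ ∈ ℂⁿ, and let T, R > 0. Then ‖∫_ℝ κ_T(s)·exp(−i·s·H)·ψ₀ ds − ∫_{−R}^{R} κ_T(s)·exp(−i·s·H)·ψ₀ ds‖ ≤ (2√T/(√π·R))·e^{−R²/(4T)}·‖ψ₀‖. -/

import Mathlib

/-! For Hermitian `H` the propagator `exp (-i s H)` is unitary, so the integrand has norm
`κ_T(s) ‖ψ₀‖`, and by evenness the truncation error is at most `2 ‖ψ₀‖ ∫_R^∞ κ_T`. On `s ≥ R` the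
Gaussian is dominated by `(s / R) e^{-s²/(4T)}`, which has the explicit antiderivative
`-(2T / R) e^{-s²/(4T)}`. -/

open MeasureTheory Real Matrix Complex Set

theorem integral_Ioi_mul_exp_neg_mul_sq {b : ℝ} (hb : 0 < b) (R : ℝ) :
    ∫ s in Ioi R, s * rexp (-b * s ^ 2) = rexp (-b * R ^ 2) / (2 * b) := by
  have hderiv (x : ℝ) : HasDerivAt (fun s ↦ -rexp (-b * s ^ 2) / (2 * b))
      (x * rexp (-b * x ^ 2)) x := by
    refine ((((hasDerivAt_pow 2 x).const_mul (-b)).exp).fun_neg.div_const (2 * b)).congr_deriv ?_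
    field_simp
    ring
  have htendsto : Filter.Tendsto (fun s ↦ -rexp (-b * s ^ 2) / (2 * b)) Filter.atTop
      (nhds 0) := by
    have := ((tendsto_exp_atBot.comp ((Filter.tendsto_pow_atTop two_ne_zero).const_mul_atTop_of_neg
      (neg_neg_of_pos hb))).neg).div_const (2 * b)
    simpa [Function.comp_def] using this
  rw [integral_Ioi_of_hasDerivAt_of_tendsto (hderiv R).continuousAt.continuousWithinAt
    (fun x _ ↦ hderiv x) (integrable_mul_exp_neg_mul_sq hb).integrableOn htendsto]
  ring

theorem integral_Ioi_exp_neg_mul_sq_le {b R : ℝ} (hb : 0 < b) (hR : 0 < R) :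
    ∫ s in Ioi R, rexp (-b * s ^ 2) ≤ rexp (-b * R ^ 2) / (2 * b * R) := by
  calc ∫ s in Ioi R, rexp (-b * s ^ 2)
      ≤ ∫ s in Ioi R, (s * rexp (-b * s ^ 2)) / R := by
        refine setIntegral_mono_on (integrable_exp_neg_mul_sq hb).integrableOn
          ((integrable_mul_exp_neg_mul_sq hb).div_const R).integrableOn measurableSet_Ioi
          fun s hs ↦ ?_
        rw [le_div_iff₀ hR, mul_comm]
        gcongr
        exact hs.le
    _ = rexp (-b * R ^ 2) / (2 * b * R) := by
        rw [integral_div, integral_Ioi_mul_exp_neg_mul_sq hb, div_div]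

theorem norm_integral_sub_intervalIntegral_le_of_even {E : Type*} [NormedAddCommGroup E]
    [NormedSpace ℝ E] {f : ℝ → E} {g : ℝ → ℝ} (hf : Integrable f) (hg : Integrable g)
    (hfg : ∀ s, ‖f s‖ ≤ g s) (hg_even : ∀ s, g (-s) = g s) {R : ℝ} (hR : 0 ≤ R) :
    ‖(∫ s, f s) - ∫ s in -R..R, f s‖ ≤ 2 * ∫ s in Ioi R, g s := by
  have hcompl : (Ioc (-R) R)ᶜ = Iic (-R) ∪ Ioi R := by
    ext s
    simp only [mem_compl_iff, mem_Ioc, mem_union, mem_Iic, mem_Ioi, not_and_or, not_lt, not_le]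
  have hleft : ∫ s in Iic (-R), g s = ∫ s in Ioi R, g s := by
    rw [← integral_comp_neg_Ioi]
    simp only [hg_even]
  calc ‖(∫ s, f s) - ∫ s in -R..R, f s‖
      = ‖∫ s in (Ioc (-R) R)ᶜ, f s‖ := by
        rw [intervalIntegral.integral_of_le (by linarith),
          ← integral_add_compl measurableSet_Ioc hf, add_sub_cancel_left]
    _ ≤ ∫ s in (Ioc (-R) R)ᶜ, g s :=
        norm_integral_le_of_norm_le hg.integrableOn (Filter.Eventually.of_forall hfg)
    _ = 2 * ∫ s in Ioi R, g s := by
        rw [hcompl, setIntegral_union (Iic_disjoint_Ioi (by linarith)) measurableSet_Ioi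
          hg.integrableOn hg.integrableOn, hleft, two_mul]

theorem IsSelfAdjoint.exp_smul_mem_unitary {A : Type*} [NormedRing A] [NormedAlgebra ℂ A]
    [StarRing A] [ContinuousStar A] [CompleteSpace A] [StarModule ℂ A] {a : A}
    (ha : IsSelfAdjoint a) {z : ℂ} (hz : z ∈ skewAdjoint ℂ) :
    NormedSpace.exp (z • a) ∈ unitary A :=
  -- the `exp` API wants a normed `ℚ`-algebra, which is not inferred from the `ℂ`-structure
  let +nondep : NormedAlgebra ℚ A := .restrictScalars ℚ ℂ A
  NormedSpace.exp_mem_unitary_of_mem_skewAdjoint (ha.smul_mem_skewAdjoint hz)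

theorem Matrix.norm_toEuclideanCLM_apply_of_mem_unitary {𝕜 ι : Type*} [RCLike 𝕜] [Fintype ι]
    [DecidableEq ι] {U : Matrix ι ι 𝕜} (hU : U ∈ unitary (Matrix ι ι 𝕜))
    (x : EuclideanSpace 𝕜 ι) : ‖toEuclideanCLM (𝕜 := 𝕜) U x‖ = ‖x‖ :=
  ContinuousLinearMap.norm_map_of_mem_unitary (Unitary.map_mem _ hU) x

section L2OpNorm

open scoped Matrix.Norms.L2Operator

theorem Matrix.IsHermitian.norm_toEuclideanCLM_exp_apply {ι : Type*} [Fintype ι]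
    [DecidableEq ι] {H : Matrix ι ι ℂ} (hH : H.IsHermitian) (s : ℝ) (x : EuclideanSpace ℂ ι) :
    ‖toEuclideanCLM (𝕜 := ℂ) (NormedSpace.exp (-(I * (s : ℂ)) • H)) x‖ = ‖x‖ := by
  refine norm_toEuclideanCLM_apply_of_mem_unitary (hH.isSelfAdjoint.exp_smul_mem_unitary ?_) x
  simp [skewAdjoint.mem_iff]

@[fun_prop]
theorem Matrix.continuous_toEuclideanCLM {𝕜 ι : Type*} [RCLike 𝕜] [Fintype ι] [DecidableEq ι] :
    Continuous (toEuclideanCLM (𝕜 := 𝕜) (n := ι)) :=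
  (AddMonoidHomClass.isometry_of_norm _ l2_opNorm_toEuclideanCLM).continuous

theorem Matrix.continuous_toEuclideanCLM_exp_apply {ι : Type*} [Fintype ι] [DecidableEq ι]
    (H : Matrix ι ι ℂ) (x : EuclideanSpace ℂ ι) :
    Continuous fun s : ℝ ↦ toEuclideanCLM (𝕜 := ℂ) (NormedSpace.exp (-(I * (s : ℂ)) • H)) x := by
  let +nondep : NormedAlgebra ℚ (Matrix ι ι ℂ) := .restrictScalars ℚ ℂ _
  fun_prop

end L2OpNorm

noncomputable def kannaiKernel (T s : ℝ) : ℝ := (√(4 * π * T))⁻¹ * rexp (-s ^ 2 / (4 * T))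

theorem kannaiKernel_nonneg (T s : ℝ) : 0 ≤ kannaiKernel T s := by
  unfold kannaiKernel
  positivity

theorem kannaiKernel_neg (T s : ℝ) : kannaiKernel T (-s) = kannaiKernel T s := by
  simp [kannaiKernel]

theorem kannaiKernel_eq (T s : ℝ) :
    kannaiKernel T s = (√(4 * π * T))⁻¹ * rexp (-(4 * T)⁻¹ * s ^ 2) := by
  rw [kannaiKernel]
  congr 2
  ring

theorem integrable_kannaiKernel {T : ℝ} (hT : 0 < T) : Integrable (kannaiKernel T) := by
  simp only [funext (kannaiKernel_eq T)]
  exact (integrable_exp_neg_mul_sq (by positivity)).const_mul _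

theorem integral_Ioi_kannaiKernel_le {T R : ℝ} (hT : 0 < T) (hR : 0 < R) :
    ∫ s in Ioi R, kannaiKernel T s ≤ √T / (√π * R) * rexp (-R ^ 2 / (4 * T)) := by
  have hsqrt : √(4 * π * T) = 2 * √π * √T := by
    rw [sqrt_mul' _ hT.le, sqrt_mul' _ pi_pos.le, show (4 : ℝ) = 2 ^ 2 by norm_num,
      sqrt_sq zero_le_two]
  simp only [kannaiKernel_eq, integral_const_mul]
  calc (√(4 * π * T))⁻¹ * ∫ s in Ioi R, rexp (-(4 * T)⁻¹ * s ^ 2)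
      ≤ (√(4 * π * T))⁻¹ * (rexp (-(4 * T)⁻¹ * R ^ 2) / (2 * (4 * T)⁻¹ * R)) := by
        gcongr
        exact integral_Ioi_exp_neg_mul_sq_le (by positivity) hR
    _ = √T / (√π * R) * rexp (-R ^ 2 / (4 * T)) := by
        rw [hsqrt, neg_mul, ← div_eq_inv_mul, neg_div]
        field_simp
        rw [sq_sqrt hT.le]
        ring

theorem kannai_truncation_homogeneous_general
    (n : ℕ) (H : Matrix (Fin n) (Fin n) ℂ) (hH : H.IsHermitian)
    (ψ₀ : EuclideanSpace ℂ (Fin n)) (T R : ℝ) (hT : 0 < T) (hR : 0 < R) :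
    ‖(∫ s : ℝ, ((Real.sqrt (4 * Real.pi * T))⁻¹ * Real.exp (-s ^ 2 / (4 * T))) •
          Matrix.toEuclideanCLM (𝕜 := ℂ) (NormedSpace.exp (-(Complex.I * (s : ℂ)) • H)) ψ₀) -
        ∫ s in (-R : ℝ)..R, ((Real.sqrt (4 * Real.pi * T))⁻¹ * Real.exp (-s ^ 2 / (4 * T))) •
          Matrix.toEuclideanCLM (𝕜 := ℂ) (NormedSpace.exp (-(Complex.I * (s : ℂ)) • H)) ψ₀‖ ≤
      (2 * Real.sqrt T / (Real.sqrt Real.pi * R)) * Real.exp (-R ^ 2 / (4 * T)) * ‖ψ₀‖ := by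
  set U : ℝ → EuclideanSpace ℂ (Fin n) :=
    fun s ↦ toEuclideanCLM (𝕜 := ℂ) (NormedSpace.exp (-(I * (s : ℂ)) • H)) ψ₀
  have hbound (s : ℝ) : ‖kannaiKernel T s • U s‖ ≤ kannaiKernel T s * ‖ψ₀‖ := by
    rw [norm_smul, hH.norm_toEuclideanCLM_exp_apply, norm_of_nonneg (kannaiKernel_nonneg T s)]
  have hg : Integrable fun s ↦ kannaiKernel T s * ‖ψ₀‖ := (integrable_kannaiKernel hT).mul_const _
  have hf : Integrable fun s ↦ kannaiKernel T s • U s :=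
    hg.mono' ((integrable_kannaiKernel hT).aestronglyMeasurable.smul
      (continuous_toEuclideanCLM_exp_apply H ψ₀).aestronglyMeasurable) (.of_forall hbound)
  calc _ ≤ 2 * ∫ s in Ioi R, kannaiKernel T s * ‖ψ₀‖ :=
        norm_integral_sub_intervalIntegral_le_of_even hf hg hbound
          (fun s ↦ by rw [kannaiKernel_neg]) hR.le
    _ = 2 * (∫ s in Ioi R, kannaiKernel T s) * ‖ψ₀‖ := by rw [integral_mul_const, mul_assoc]
    _ ≤ 2 * (√T / (√π * R) * rexp (-R ^ 2 / (4 * T))) * ‖ψ₀‖ := by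
        gcongr
        exact integral_Ioi_kannaiKernel_le hT hR
    _ = _ := by ring

/-- Gaussian truncation error for the homogeneous Kannai integral:
truncating the Gaussian average of `e^{-isH} ψ₀` to `[-R, R]` incurs an error
at most `(2√T/(√π R)) e^{-R²/(4T)} ‖ψ₀‖`. -/
theorem kannai_truncation_homogeneous
    (n : ℕ) (hn : 0 < n) (H : Matrix (Fin n) (Fin n) ℂ) (hH : H.IsHermitian)
    (ψ₀ : EuclideanSpace ℂ (Fin n)) (T R : ℝ) (hT : 0 < T) (hR : 0 < R) :
    ‖(∫ s : ℝ, ((Real.sqrt (4 * Real.pi * T))⁻¹ * Real.exp (-s ^ 2 / (4 * T))) •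
          Matrix.toEuclideanCLM (𝕜 := ℂ) (NormedSpace.exp (-(Complex.I * (s : ℂ)) • H)) ψ₀) -
        ∫ s in (-R : ℝ)..R, ((Real.sqrt (4 * Real.pi * T))⁻¹ * Real.exp (-s ^ 2 / (4 * T))) •
          Matrix.toEuclideanCLM (𝕜 := ℂ) (NormedSpace.exp (-(Complex.I * (s : ℂ)) • H)) ψ₀‖ ≤
      (2 * Real.sqrt T / (Real.sqrt Real.pi * R)) * Real.exp (-R ^ 2 / (4 * T)) * ‖ψ₀‖ :=
  kannai_truncation_homogeneous_general n H hH ψ₀ T R hT hR
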